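/- arXiv:2303.08664 — 13 statements merged into one kernel-verified Lean document; each statement's English description precedes it below -/
import Mathlib

section
/- Let B be a Boolean weak contact algebra and let Q1 and Q2 be G-representatives in B. Then C(x,y) holds for all x ∈ Q1 and y ∈ Q2 if and only if Q2 is covered by Q1 (i.e., for every x ∈ Q1 there is y ∈ Q2 with y ≤ x). -/
variable {α : Type*}

/-- Non-tangential inclusion: `x ≪ y` iff `¬ C x yᶜ`. -/
def NTP [BooleanAlgebra α] (C : α → α → Prop) (x y : α) : Prop := ¬ C x yᶜ

/-- `CoveredBy X Y` : `X` is covered by `Y`, i.e. every member of `Y`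
has a member of `X` below it. -/
def CoveredBy [BooleanAlgebra α] (X Y : Set α) : Prop := ∀ y ∈ Y, ∃ x ∈ X, x ≤ y

/-- Grzegorczyk representative of a point. -/
def GRep [BooleanAlgebra α] (C : α → α → Prop) (Q : Set α) : Prop :=
  Q.Nonempty ∧
  (⊥ : α) ∉ Q ∧
  (∀ u ∈ Q, ∀ v ∈ Q, u = v ∨ NTP C u v ∨ NTP C v u) ∧
  (∀ u ∈ Q, ∃ v ∈ Q, NTP C v u) ∧
  (∀ x y : α, (∀ u ∈ Q, u ⊓ x ≠ ⊥ ∧ u ⊓ y ≠ ⊥) → C x y)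

/-- Abstractive set. -/
def Abstr [BooleanAlgebra α] (C : α → α → Prop) (A : Set α) : Prop :=
  (⊥ : α) ∉ A ∧
  (∀ u ∈ A, ∀ v ∈ A, u = v ∨ NTP C u v ∨ NTP C v u) ∧
  ¬ ∃ x : α, x ≠ ⊥ ∧ ∀ y ∈ A, x ≤ y

/-- Whitehead representative of a point. -/
def WRep [BooleanAlgebra α] (C : α → α → Prop) (A : Set α) : Prop :=
  Abstr C A ∧ ∀ B : Set α, Abstr C B → CoveredBy B A → CoveredBy A B

theorem stmt0 [BooleanAlgebra α] (C : α → α → Prop)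
    (hC0 : ∀ x : α, ¬ C ⊥ x)
    (hC1 : ∀ x y : α, x ≤ y → x ≠ ⊥ → C x y)
    (hC2 : ∀ x y : α, C x y → C y x)
    (hC3 : ∀ x y : α, x ≤ y → ∀ z, C z x → C z y)
    (Q1 Q2 : Set α) (hQ1 : GRep C Q1) (hQ2 : GRep C Q2) :
    (∀ x ∈ Q1, ∀ y ∈ Q2, C x y) ↔ CoveredBy Q2 Q1 := by
  obtain ⟨hne1, hbot1, hr1_1, hr2_1, hr3_1⟩ := hQ1
  obtain ⟨hne2, hbot2, hr1_2, hr2_2, hr3_2⟩ := hQ2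
  -- any two elements of Q2 overlap
  have hov : ∀ u ∈ Q2, ∀ v ∈ Q2, u ⊓ v ≠ ⊥ := by
    intro u hu v hv
    rcases hr1_2 u hu v hv with h | h | h
    · subst h
      intro hb
      rw [inf_idem] at hb
      exact hbot2 (hb ▸ hu)
    · intro hb
      exact h (hC1 u vᶜ (by
        have : Disjoint u v := disjoint_iff.mpr hb
        exact le_compl_iff_disjoint_right.mpr this) (fun h => hbot2 (h ▸ hu)))
    · intro hb
      exact h (hC1 v uᶜ (by
        have : Disjoint v u := disjoint_iff.mpr (by rwa [inf_comm] at hb)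
        exact le_compl_iff_disjoint_right.mpr this) (fun h => hbot2 (h ▸ hv)))
  constructor
  · intro hC x hx
    obtain ⟨v, hv, hvx⟩ := hr2_1 x hx
    by_contra hno
    push_neg at hno
    apply hvx
    apply hr3_2 v xᶜ
    intro u hu
    constructor
    · intro hb
      -- u ⊓ v = ⊥ : contradiction with C v w for w ≪ u
      obtain ⟨w, hw, hwu⟩ := hr2_2 u hu
      apply hwu
      have hvle : v ≤ uᶜ := le_compl_iff_disjoint_right.mpr
        (disjoint_iff.mpr (by rwa [inf_comm] at hb))
      exact hC3 v uᶜ hvle w (hC2 v w (hC v hv w hw))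
    · intro hb
      have : u ≤ xᶜᶜ := le_compl_iff_disjoint_right.mpr (disjoint_iff.mpr hb)
      rw [compl_compl] at this
      exact hno u hu this
  · intro hcov x hx y hy
    apply hr3_2 x y
    intro u hu
    obtain ⟨z, hz, hzx⟩ := hcov x hx
    refine ⟨fun hb => hov u hu z hz ?_, hov u hu y hy⟩
    exact le_bot_iff.mp (le_trans (inf_le_inf_left u hzx) hb.le)
end

section
/- Let B be a Boolean weak contact algebra. If Q1 and Q2 are G-representatives in B and Q1 is covered by Q2, then Q2 is covered by Q1. -/
variable {α : Type*}

theorem stmt1 [BooleanAlgebra α] (C : α → α → Prop)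
    (hC0 : ∀ x : α, ¬ C ⊥ x)
    (hC1 : ∀ x y : α, x ≤ y → x ≠ ⊥ → C x y)
    (hC2 : ∀ x y : α, C x y → C y x)
    (hC3 : ∀ x y : α, x ≤ y → ∀ z, C z x → C z y)
    (Q1 Q2 : Set α) (hQ1 : GRep C Q1) (hQ2 : GRep C Q2)
    (h : CoveredBy Q1 Q2) : CoveredBy Q2 Q1 := by
  obtain ⟨hne1, hbot1, hr11, hr21, hr31⟩ := hQ1
  obtain ⟨hne2, hbot2, hr12, hr22, hr32⟩ := hQ2
  intro y hy
  by_contra hcon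
  push_neg at hcon
  obtain ⟨w, hw, hwy⟩ := hr21 y hy
  apply hwy
  apply hr32 w yᶜ
  intro v hv
  constructor
  · -- v ⊓ w ≠ ⊥
    obtain ⟨x, hx, hxv⟩ := h v hv
    have hxne : x ≠ ⊥ := fun hb => hbot1 (hb ▸ hx)
    have hwne : w ≠ ⊥ := fun hb => hbot1 (hb ▸ hw)
    have hxw : x ⊓ w ≠ ⊥ := by
      rcases hr11 x hx w hw with he | hn | hn
      · subst he; simpa using hxne
      · intro hb
        exact hn (hC1 x wᶜ (le_compl_iff_disjoint_right.mpr (disjoint_iff.mpr hb)) hxne)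
      · intro hb
        exact hn (hC1 w xᶜ (le_compl_iff_disjoint_right.mpr (disjoint_iff.mpr (by rwa [inf_comm] at hb))) hwne)
    intro hb
    exact hxw (le_bot_iff.mp (le_trans (inf_le_inf_right w hxv) (le_of_eq hb)))
  · -- v ⊓ yᶜ ≠ ⊥
    intro hb
    exact hcon v hv (by rwa [← sdiff_eq, sdiff_eq_bot_iff] at hb)
end

section
/- Let X be a topological space and let A be an abstractive set in the topological contact algebra (RO(X), C_T). Then the set-theoretic intersection ⋂A is a closed subset of X. Moreover, if X is connected and ⋂A ≠ ∅, then ⋂A is not a regular open subset of X. -/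
open Set Topology

variable {X : Type*} [TopologicalSpace X]

/-- A regular open subset of a topological space. -/
def RegOpen (u : Set X) : Prop := u = interior (closure u)

/-- Abstractive set in the topological contact algebra `(RO(X), C_T)`:
a set of regular open sets satisfying (r0), (r1) (with `u ≪_T v` iff
`closure u ⊆ v`) and the lower-bound condition (A). -/
def TAbstr (A : Set (Set X)) : Prop :=
  (∀ u ∈ A, RegOpen u) ∧
  (∅ : Set X) ∉ A ∧
  (∀ u ∈ A, ∀ v ∈ A, u = v ∨ closure u ⊆ v ∨ closure v ⊆ u) ∧
  ¬ ∃ x : Set X, RegOpen x ∧ x ≠ ∅ ∧ ∀ y ∈ A, x ⊆ y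

/-- `TCoveredBy X' Y'` : `X'` is covered by `Y'`. -/
def TCoveredBy (X' Y' : Set (Set X)) : Prop := ∀ y ∈ Y', ∃ x ∈ X', x ⊆ y

/-- Whitehead representative in `(RO(X), C_T)`. -/
def TWRep (A : Set (Set X)) : Prop :=
  TAbstr A ∧ ∀ B : Set (Set X), TAbstr B → TCoveredBy B A → TCoveredBy A B

theorem stmt2 (A : Set (Set X)) (hA : TAbstr A) :
    IsClosed (⋂₀ A) ∧
      (ConnectedSpace X → ⋂₀ A ≠ ∅ → ¬ RegOpen (⋂₀ A)) := by
  obtain ⟨hreg, hnemem, hr1, hlb⟩ := hA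
  have hstep : ∀ u ∈ A, ∃ v ∈ A, closure v ⊆ u := by
    intro u hu
    by_contra h
    push_neg at h
    apply hlb
    refine ⟨u, hreg u hu, fun he => hnemem (he ▸ hu), ?_⟩
    intro y hy
    rcases hr1 u hu y hy with rfl | h1 | h2
    · exact subset_rfl
    · exact subset_closure.trans h1
    · exact absurd h2 (h y hy)
  have heq : ⋂₀ A = ⋂ u ∈ A, closure u := by
    apply Set.Subset.antisymm
    · exact Set.subset_iInter₂ fun u hu =>
        (Set.sInter_subset_of_mem hu).trans subset_closure
    · intro x hx
      simp only [Set.mem_iInter] at hx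
      intro u hu
      obtain ⟨v, hv, hvc⟩ := hstep u hu
      exact hvc (hx v hv)
  have hcl : IsClosed (⋂₀ A) := heq ▸ isClosed_biInter fun u _ => isClosed_closure
  refine ⟨hcl, fun hconn hne' hro => ?_⟩
  have hio : (⋂₀ A) = interior (⋂₀ A) := by
    conv_lhs => rw [hro, hcl.closure_eq]
  have hopen : IsOpen (⋂₀ A) := hio ▸ isOpen_interior
  have huniv : (⋂₀ A) = Set.univ :=
    (IsClopen.eq_univ ⟨hcl, hopen⟩ (Set.nonempty_iff_ne_empty.2 hne'))
  apply hlb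
  refine ⟨Set.univ, ?_, ?_, ?_⟩
  · show (Set.univ : Set X) = interior (closure Set.univ)
    rw [closure_univ, interior_univ]
  · rw [← huniv]; exact hne'
  · intro y hy
    rw [← huniv]
    exact Set.sInter_subset_of_mem hy
end

section
/- Let X be a topological space, p ∈ X, and let A be an abstractive set in the topological contact algebra (RO(X), C_T) that is at the same time a local (neighborhood) basis at p, i.e., every element of A is an open set containing p, and every open set containing p includes some element of A. Then A is a W-representative. -/
open Set Topology

variable {X : Type*} [TopologicalSpace X]

theorem stmt3 (p : X) (A : Set (Set X)) (hA : TAbstr A)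
    (hmem : ∀ u ∈ A, IsOpen u ∧ p ∈ u)
    (hbasis : ∀ v : Set X, IsOpen v → p ∈ v → ∃ u ∈ A, u ⊆ v) :
    TWRep A := by
  refine ⟨hA, ?_⟩
  intro B hB hcov
  obtain ⟨hBreg, hB0, hBtri, hBlb⟩ := hB
  -- Step 1: p ∈ closure b for all b ∈ B
  have hpcl : ∀ b ∈ B, p ∈ closure b := by
    intro b hb
    by_contra hp
    have hvopen : IsOpen (closure b)ᶜ := (isClosed_closure).isOpen_compl
    obtain ⟨a, ha, hav⟩ := hbasis (closure b)ᶜ hvopen hp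
    obtain ⟨b', hb', hb'a⟩ := hcov a ha
    have hdisj : b' ∩ b = ∅ := by
      apply Set.eq_empty_of_forall_notMem
      intro x hx
      exact (hav (hb'a hx.1)) (subset_closure hx.2)
    rcases hBtri b' hb' b hb with h | h | h
    · subst h
      rw [Set.inter_self] at hdisj
      exact hB0 (hdisj ▸ hb')
    · have hsub : b' ⊆ b := subset_closure.trans h
      have : b' = ∅ := by
        apply Set.eq_empty_of_forall_notMem
        intro x hx
        have : x ∈ b' ∩ b := ⟨hx, hsub hx⟩
        rw [hdisj] at this; exact this
      exact hB0 (this ▸ hb')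
    · have hbb : b ⊆ b' := subset_closure.trans h
      have : b = ∅ := by
        apply Set.eq_empty_of_forall_notMem
        intro x hx
        have : x ∈ b' ∩ b := ⟨hbb hx, hx⟩
        rw [hdisj] at this; exact this
      exact hB0 (this ▸ hb)
  -- Step 2: main
  intro b hb
  have hbne : b ≠ ∅ := fun h => hB0 (h ▸ hb)
  have hbreg : RegOpen b := hBreg b hb
  -- b is not a lower bound of B
  have : ¬ ∀ y ∈ B, b ⊆ y := fun h => hBlb ⟨b, hbreg, hbne, h⟩
  push_neg at this
  obtain ⟨b'', hb'', hnsub⟩ := this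
  have hclsub : closure b'' ⊆ b := by
    rcases hBtri b hb b'' hb'' with h | h | h
    · exact absurd (h ▸ subset_refl b) hnsub
    · exact absurd (subset_closure.trans h) hnsub
    · exact h
  have hpb : p ∈ b := hclsub (hpcl b'' hb'')
  have hbopen : IsOpen b := by rw [hbreg]; exact isOpen_interior
  exact hbasis b hbopen hpb
end

section
/- Let X be a regular topological space and let A be a W-representative in the topological contact algebra (RO(X), C_T). Then the set-theoretic intersection ⋂A is a nowhere dense subset of X. -/
open Set Topology

variable {X : Type*} [TopologicalSpace X]

lemma regOpen_int_cl (S : Set X) : RegOpen (interior (closure S)) := by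
  have h1 : closure (interior (closure S)) ⊆ closure S :=
    closure_minimal interior_subset isClosed_closure
  have h2 : interior (closure S) ⊆ closure (interior (closure S)) := subset_closure
  exact subset_antisymm
    (interior_maximal h2 isOpen_interior)
    (interior_mono h1)

theorem stmt4 [RegularSpace X] (A : Set (Set X)) (hA : TWRep A) :
    IsNowhereDense (⋂₀ A) := by
  obtain ⟨⟨hro, -, -, hlb⟩, -⟩ := hA
  by_contra h
  exact hlb ⟨interior (closure (⋂₀ A)), regOpen_int_cl _, h, fun y hy => by
    rw [hro y hy]
    exact interior_mono (closure_mono (sInter_subset_of_mem hy))⟩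
end

section
/- Let B be a Boolean weak contact algebra satisfying the non-tangential part axiom (C5). If a is an atom of B, then the singleton {a} is a G-representative. -/
variable {α : Type*}

theorem stmt6 [BooleanAlgebra α] (C : α → α → Prop)
    (hC0 : ∀ x : α, ¬ C ⊥ x)
    (hC1 : ∀ x y : α, x ≤ y → x ≠ ⊥ → C x y)
    (hC2 : ∀ x y : α, C x y → C y x)
    (hC3 : ∀ x y : α, x ≤ y → ∀ z, C z x → C z y)
    (hC5 : ∀ x : α, x ≠ ⊥ → ∃ y : α, y ≠ ⊥ ∧ NTP C y x)
    (a : α) (ha : IsAtom a) :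
    GRep C {a} := by
  have hab : a ≠ ⊥ := ha.1
  -- if a meets x nontrivially, a ≤ x
  have hatom : ∀ x : α, a ⊓ x ≠ ⊥ → a ≤ x := by
    intro x hx
    rcases eq_or_lt_of_le (inf_le_left : a ⊓ x ≤ a) with h | h
    · exact h ▸ inf_le_right
    · exact absurd (ha.2 _ h) hx
  have hmono : ∀ x y z w : α, x ≤ z → y ≤ w → C x y → C z w := by
    intro x y z w hxz hyw h
    exact hC2 _ _ (hC3 _ _ hxz _ (hC2 _ _ (hC3 _ _ hyw _ h)))
  have hnaa : NTP C a a := by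
    obtain ⟨y, hy, hyn⟩ := hC5 a hab
    have hya : y ≤ a := by
      by_contra hle
      have hne : y ⊓ aᶜ ≠ ⊥ := fun h => hle (sdiff_eq_bot_iff.mp (by rwa [sdiff_eq]))
      exact hyn (hmono _ _ _ _ inf_le_left le_rfl (hC1 _ _ inf_le_right hne))
    have : y = a := ((ha.le_iff.mp hya).resolve_left hy)
    exact this ▸ hyn
  refine ⟨⟨a, rfl⟩, ?_, ?_, ?_, ?_⟩
  · intro h; exact hab (Set.mem_singleton_iff.mp h).symm
  · intro u hu v hv
    left; rw [Set.mem_singleton_iff.mp hu, Set.mem_singleton_iff.mp hv]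
  · intro u hu
    exact ⟨a, rfl, (Set.mem_singleton_iff.mp hu) ▸ hnaa⟩
  · intro x y h
    obtain ⟨hx, hy⟩ := h a rfl
    exact hmono a a x y (hatom x hx) (hatom y hy) (hC1 a a le_rfl hab)
end

section
/- Let B be a Boolean weak contact algebra. If A is an abstractive set, Q is a G-representative, and A is covered by Q, then A is a G-representative and A and Q are coinitial (each covers the other). -/
variable {α : Type*}

theorem stmt8 [BooleanAlgebra α] (C : α → α → Prop)
    (hC0 : ∀ x : α, ¬ C ⊥ x)
    (hC1 : ∀ x y : α, x ≤ y → x ≠ ⊥ → C x y)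
    (hC2 : ∀ x y : α, C x y → C y x)
    (hC3 : ∀ x y : α, x ≤ y → ∀ z, C z x → C z y)
    (A Q : Set α) (hA : Abstr C A) (hQ : GRep C Q)
    (hcov : CoveredBy A Q) :
    GRep C A ∧ CoveredBy A Q ∧ CoveredBy Q A := by
  obtain ⟨hA0, hA1, hA2⟩ := hA
  obtain ⟨hQne, hQ0, hQ1, hQ2, hQ3⟩ := hQ
  have ntple : ∀ x y : α, NTP C x y → x ≤ y := by
    intro x y h
    by_contra hle
    apply h
    have hne : x ⊓ yᶜ ≠ ⊥ := by
      rw [← sdiff_eq]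
      simpa [sdiff_eq_bot_iff] using hle
    exact hC2 _ _ (hC3 _ _ inf_le_left _ (hC2 _ _ (hC1 _ _ inf_le_right hne)))
  have chain : ∀ a ∈ A, ∀ b ∈ A, a ≤ b ∨ b ≤ a := by
    intro a ha b hb
    rcases hA1 a ha b hb with h | h | h
    · exact Or.inl h.le
    · exact Or.inl (ntple _ _ h)
    · exact Or.inr (ntple _ _ h)
  have hAne : A.Nonempty := by
    obtain ⟨q, hq⟩ := hQne
    obtain ⟨a, haA, _⟩ := hcov q hq
    exact ⟨a, haA⟩
  have hover : ∀ q ∈ Q, ∀ a ∈ A, q ⊓ a ≠ ⊥ := by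
    intro q hq a ha
    obtain ⟨b, hbA, hbq⟩ := hcov q hq
    have hbne : b ≠ ⊥ := fun e => hA0 (e ▸ hbA)
    have hane : a ≠ ⊥ := fun e => hA0 (e ▸ ha)
    rcases chain b hbA a ha with h | h
    · intro e
      exact hbne (le_bot_iff.mp (e ▸ le_inf hbq h))
    · intro e
      exact hane (le_bot_iff.mp (e ▸ le_inf (h.trans hbq) le_rfl))
  have hbelow : ∀ a ∈ A, ∃ b ∈ A, NTP C b a := by
    intro a ha
    have hane : a ≠ ⊥ := fun e => hA0 (e ▸ ha)
    by_contra hcon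
    push_neg at hcon
    apply hA2
    refine ⟨a, hane, ?_⟩
    intro y hy
    rcases hA1 a ha y hy with h | h | h
    · exact h.le
    · exact ntple _ _ h
    · exact absurd h (hcon y hy)
  have hcov2 : CoveredBy Q A := by
    intro a ha
    by_contra hcon
    push_neg at hcon
    obtain ⟨b, hbA, hb⟩ := hbelow a ha
    apply hb
    apply hQ3
    intro q hq
    refine ⟨hover q hq b hbA, ?_⟩
    intro e
    apply hcon q hq
    have : q \ a = ⊥ := by rw [sdiff_eq]; exact e
    exact sdiff_eq_bot_iff.mp this
  refine ⟨⟨hAne, hA0, hA1, hbelow, ?_⟩, hcov, hcov2⟩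
  intro x y h
  apply hQ3
  intro q hq
  obtain ⟨a, haA, haq⟩ := hcov q hq
  obtain ⟨h1, h2⟩ := h a haA
  constructor
  · intro e
    exact h1 (le_bot_iff.mp (e ▸ inf_le_inf_right x haq))
  · intro e
    exact h2 (le_bot_iff.mp (e ▸ inf_le_inf_right y haq))
end

section
/- Let B be an atomless Boolean weak contact algebra satisfying (C5). Then every nonzero element x of B has two nonzero proper parts that are separated from each other: there exist y and z with 0 < y < x, 0 < z < x, and ¬C(y,z). -/
variable {α : Type*}

theorem stmt9 [BooleanAlgebra α] (C : α → α → Prop)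
    (hC0 : ∀ x : α, ¬ C ⊥ x)
    (hC1 : ∀ x y : α, x ≤ y → x ≠ ⊥ → C x y)
    (hC2 : ∀ x y : α, C x y → C y x)
    (hC3 : ∀ x y : α, x ≤ y → ∀ z, C z x → C z y)
    (hC5 : ∀ x : α, x ≠ ⊥ → ∃ y : α, y ≠ ⊥ ∧ NTP C y x)
    (hAtomless : ∀ x : α, x ≠ ⊥ → ∃ y : α, y ≠ ⊥ ∧ y < x)
    (x : α) (hx : x ≠ ⊥) :
    ∃ y z : α, ⊥ < y ∧ y < x ∧ ⊥ < z ∧ z < x ∧ ¬ C y z := by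
  obtain ⟨w, hw0, hwx⟩ := hAtomless x hx
  obtain ⟨y, hy0, hyw⟩ := hC5 w hw0
  -- y ≤ w
  have hyle : y ≤ w := by
    by_contra h
    have h1 : y ⊓ wᶜ ≠ ⊥ := by
      intro hbot
      rw [← sdiff_eq] at hbot
      exact h (sdiff_eq_bot_iff.mp hbot)
    have : C (y ⊓ wᶜ) wᶜ := hC1 _ _ inf_le_right h1
    exact hyw (hC2 _ _ (hC3 _ _ inf_le_left _ (hC2 _ _ this)))
  set z := x ⊓ wᶜ with hzdef
  have hz0 : z ≠ ⊥ := by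
    intro hbot
    have hxw : x ≤ w := by
      rw [hzdef, ← sdiff_eq] at hbot
      exact sdiff_eq_bot_iff.mp hbot
    exact absurd (le_antisymm hxw hwx.le) hwx.ne'
  refine ⟨y, z, hy0.bot_lt, lt_of_le_of_lt hyle hwx, hz0.bot_lt, ?_, ?_⟩
  · refine lt_of_le_of_ne inf_le_left ?_
    intro hzx
    have : w ≤ wᶜ := hwx.le.trans (by rw [← hzx]; exact inf_le_right)
    exact hw0 (by simpa using le_inf le_rfl this)
  · intro hC
    exact hyw (hC3 _ _ inf_le_right _ hC)
end

section
/- Let B be a Boolean weak contact algebra satisfying (C5). Then B is atomless if and only if every G-representative in B is a W-representative. -/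
variable {α : Type*}

/-- Non-tangential inclusion implies inclusion. -/
lemma ntp_le [BooleanAlgebra α] (C : α → α → Prop)
    (hC1 : ∀ x y : α, x ≤ y → x ≠ ⊥ → C x y)
    (hC2 : ∀ x y : α, C x y → C y x)
    (hC3 : ∀ x y : α, x ≤ y → ∀ z, C z x → C z y)
    {x y : α} (h : NTP C x y) : x ≤ y := by
  by_contra hle
  have hne : x ⊓ yᶜ ≠ ⊥ := by
    intro hb
    exact hle (sdiff_eq_bot_iff.mp (by rwa [sdiff_eq]))
  have c1 : C (x ⊓ yᶜ) yᶜ := hC1 _ _ inf_le_right hne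
  have c2 : C yᶜ (x ⊓ yᶜ) := hC2 _ _ c1
  have c3 : C yᶜ x := hC3 _ _ inf_le_left _ c2
  exact h (hC2 _ _ c3)

theorem stmt10 [BooleanAlgebra α] (C : α → α → Prop)
    (hC0 : ∀ x : α, ¬ C ⊥ x)
    (hC1 : ∀ x y : α, x ≤ y → x ≠ ⊥ → C x y)
    (hC2 : ∀ x y : α, C x y → C y x)
    (hC3 : ∀ x y : α, x ≤ y → ∀ z, C z x → C z y)
    (hC5 : ∀ x : α, x ≠ ⊥ → ∃ y : α, y ≠ ⊥ ∧ NTP C y x) :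
    (∀ x : α, x ≠ ⊥ → ∃ y : α, y ≠ ⊥ ∧ y < x) ↔
      (∀ Q : Set α, GRep C Q → WRep C Q) := by
  have hle := fun {x y : α} (h : NTP C x y) => ntp_le C hC1 hC2 hC3 h
  constructor
  · -- atomless → every GRep is a WRep
    rintro hA Q ⟨hne, h0, h1, h2, h3⟩
    refine ⟨⟨h0, h1, ?_⟩, ?_⟩
    · -- (A): no nonzero lower bound of Q
      rintro ⟨x, hx, hxle⟩
      obtain ⟨y, hy, hylt⟩ := hA x hx
      obtain ⟨z, hz, hzy⟩ := hC5 y hy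
      apply hzy
      apply h3 z yᶜ
      intro u hu
      have hxu : x ≤ u := hxle u hu
      constructor
      · have hzu : z ≤ u := le_trans (hle hzy) (le_trans hylt.le hxu)
        rw [inf_eq_right.mpr hzu]; exact hz
      · intro hb
        have hxyc : x ⊓ yᶜ ≠ ⊥ := by
          intro hb2
          exact hylt.ne (le_antisymm hylt.le (sdiff_eq_bot_iff.mp (by rwa [sdiff_eq])))
        exact hxyc (le_bot_iff.mp (hb ▸ inf_le_inf_right _ hxu))
    · -- covering condition
      rintro Bs ⟨hB0, hB1, hBA⟩ hcov b hb
      by_contra hno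
      push_neg at hno
      have hbne : b ≠ ⊥ := fun h => hB0 (h ▸ hb)
      -- find b2 ∈ Bs with NTP C b2 b
      have : ∃ b2 ∈ Bs, NTP C b2 b := by
        by_contra hno2
        push_neg at hno2
        apply hBA
        refine ⟨b, hbne, fun y hy => ?_⟩
        rcases hB1 b hb y hy with h | h | h
        · exact h.le
        · exact hle h
        · exact absurd h (hno2 y hy)
      obtain ⟨b2, hb2, hb2b⟩ := this
      have hb2ne : b2 ≠ ⊥ := fun h => hB0 (h ▸ hb2)
      apply hb2b
      apply h3 b2 bᶜ
      intro q hq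
      constructor
      · -- q overlaps b2
        obtain ⟨b', hb', hb'q⟩ := hcov q hq
        have hb'ne : b' ≠ ⊥ := fun h => hB0 (h ▸ hb')
        rcases hB1 b' hb' b2 hb2 with h | h | h
        · rw [inf_eq_right.mpr (h ▸ hb'q)]; exact hb2ne
        · intro hc
          exact hb'ne (le_bot_iff.mp (hc ▸ le_inf hb'q (hle h)))
        · rw [inf_eq_right.mpr (le_trans (hle h) hb'q)]; exact hb2ne
      · -- q overlaps bᶜ
        intro hc
        exact hno q hq (sdiff_eq_bot_iff.mp (by rwa [sdiff_eq]))
  · -- every GRep is a WRep → atomless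
    intro h x hx
    by_contra hno
    push_neg at hno
    have hatom : ∀ y : α, y ≤ x → y ≠ ⊥ → y = x := by
      intro y hyx hy
      by_contra hne
      exact hno y hy (lt_of_le_of_ne hyx hne)
    obtain ⟨y, hy, hyx⟩ := hC5 x hx
    have hxx : NTP C x x := (hatom y (hle hyx) hy) ▸ hyx
    have hG : GRep C {x} := by
      refine ⟨⟨x, rfl⟩, fun hc => hx (Set.mem_singleton_iff.mp hc).symm, ?_, ?_, ?_⟩
      · intro u hu v hv
        left
        rw [Set.mem_singleton_iff.mp hu, Set.mem_singleton_iff.mp hv]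
      · intro u hu
        exact ⟨x, rfl, (Set.mem_singleton_iff.mp hu) ▸ hxx⟩
      · intro a b hab
        obtain ⟨h1, h2⟩ := hab x rfl
        have hxa : x ≤ a := by
          have := hatom (x ⊓ a) inf_le_left h1
          exact inf_eq_left.mp this
        have hxb : x ≤ b := by
          have := hatom (x ⊓ b) inf_le_left h2
          exact inf_eq_left.mp this
        have cxx : C x x := hC1 x x le_rfl hx
        have cxb : C x b := hC3 x b hxb x cxx
        have cbx : C b x := hC2 _ _ cxb
        have cba : C b a := hC3 x a hxa b cbx
        exact hC2 _ _ cba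
    obtain ⟨⟨_, _, hA⟩, _⟩ := h {x} hG
    exact hA ⟨x, hx, fun y hy => (Set.mem_singleton_iff.mp hy) ▸ le_rfl⟩
end

section
/- Let B be a Boolean algebra and d ∈ B a nonzero element. Then the relation C_d, defined by x C_d y iff x ⊓ y ≠ 0, or (x ⊓ d ≠ 0 and y ⊓ d ≠ 0), is a contact relation on B, i.e., it satisfies axioms (C0)–(C4). -/
variable {α : Type*}

/-- The contact relation determined by a distinguished element `d`. -/
def Cd [BooleanAlgebra α] (d : α) (x y : α) : Prop :=
  x ⊓ y ≠ ⊥ ∨ (x ⊓ d ≠ ⊥ ∧ y ⊓ d ≠ ⊥)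

theorem stmt11 [BooleanAlgebra α] (d : α) (hd : d ≠ ⊥) :
    (∀ x : α, ¬ Cd d ⊥ x) ∧
    (∀ x y : α, x ≤ y → x ≠ ⊥ → Cd d x y) ∧
    (∀ x y : α, Cd d x y → Cd d y x) ∧
    (∀ x y : α, x ≤ y → ∀ z, Cd d z x → Cd d z y) ∧
    (∀ x y z : α, Cd d x (y ⊔ z) → Cd d x y ∨ Cd d x z) := by
  refine ⟨?_, ?_, ?_, ?_, ?_⟩
  · intro x h
    rcases h with h | ⟨h, _⟩ <;> simp at h
  · intro x y hxy hx
    left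
    rwa [inf_eq_left.mpr hxy]
  · intro x y h
    rcases h with h | ⟨h1, h2⟩
    · left; rwa [inf_comm]
    · right; exact ⟨h2, h1⟩
  · intro x y hxy z h
    rcases h with h | ⟨h1, h2⟩
    · left; intro hc
      exact h (le_bot_iff.mp (le_trans (inf_le_inf_left z hxy) (le_of_eq hc)))
    · right; exact ⟨h1, fun hc => h2 (le_bot_iff.mp (le_trans (inf_le_inf_right d hxy) (le_of_eq hc)))⟩
  · intro x y z h
    rcases h with h | ⟨h1, h2⟩
    · rw [inf_sup_left] at h
      rcases not_and_or.mp (fun hc => h (sup_eq_bot_iff.mpr hc)) with h' | h'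
      · exact Or.inl (Or.inl h')
      · exact Or.inr (Or.inl h')
    · rw [inf_sup_right] at h2
      rcases not_and_or.mp (fun hc => h2 (sup_eq_bot_iff.mpr hc)) with h' | h'
      · exact Or.inl (Or.inr ⟨h1, h'⟩)
      · exact Or.inr (Or.inr ⟨h1, h'⟩)
end

section
/- Let B be a Boolean algebra, d ∈ B nonzero, and consider the Boolean contact algebra (B, C_d). If x is nonzero and x < d, then x has no nonzero non-tangential part: there is no nonzero y with y ≪ x (where ≪ is defined from C_d). Consequently, if d is not an atom of B, then (B, C_d) fails to satisfy (C5). -/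
variable {α : Type*}

theorem stmt13 [BooleanAlgebra α] (d : α) (hd : d ≠ ⊥) :
    (∀ x : α, x ≠ ⊥ → x < d → ¬ ∃ y : α, y ≠ ⊥ ∧ NTP (Cd d) y x) ∧
    (¬ IsAtom d → ¬ ∀ x : α, x ≠ ⊥ → ∃ y : α, y ≠ ⊥ ∧ NTP (Cd d) y x) := by
  have main : ∀ x : α, x ≠ ⊥ → x < d → ¬ ∃ y : α, y ≠ ⊥ ∧ NTP (Cd d) y x := by
    intro x hx hxd ⟨y, hy, hntp⟩
    unfold NTP Cd at hntp
    push_neg at hntp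
    obtain ⟨h1, h2⟩ := hntp
    have hyx : y ≤ x := by
      rwa [← sdiff_eq, sdiff_eq_bot_iff] at h1
    have hyd : y ⊓ d = y := inf_eq_left.mpr (hyx.trans hxd.le)
    have hxcd : xᶜ ⊓ d ≠ ⊥ := by
      intro h
      have : d ≤ x := by
        rwa [inf_comm, ← sdiff_eq, sdiff_eq_bot_iff] at h
      exact absurd (le_antisymm this hxd.le) hxd.ne'
    rw [hyd] at h2
    exact hxcd (h2 hy)
  refine ⟨main, fun hna hall => hna ?_⟩
  constructor
  · exact hd
  · intro b hb
    by_contra hbne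
    obtain ⟨y, hy, hntp⟩ := hall b hbne
    exact main b hbne hb ⟨y, hy, hntp⟩
end

section
/- Let B be a Boolean contact algebra satisfying the interpolation axiom (IA) and the coherence axiom (C6). If A is a W-representative that has a coinitial subset given by an antitone sequence indexed by the natural numbers (i.e., there is a sequence x : ℕ → B with x_{n+1} ≤ x_n, each x_n ∈ A, and the range of x coinitial with A), then A is a G-representative. -/
variable {α : Type*}

theorem stmt16 [BooleanAlgebra α] (C : α → α → Prop)
    (hC0 : ∀ x : α, ¬ C ⊥ x)
    (hC1 : ∀ x y : α, x ≤ y → x ≠ ⊥ → C x y)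
    (hC2 : ∀ x y : α, C x y → C y x)
    (hC3 : ∀ x y : α, x ≤ y → ∀ z, C z x → C z y)
    (hC4 : ∀ x y z : α, C x (y ⊔ z) → C x y ∨ C x z)
    (hIA : ∀ x y : α, NTP C x y → ∃ z : α, NTP C x z ∧ NTP C z y)
    (hC6 : ∀ x : α, x ≠ ⊥ → x ≠ ⊤ → C x xᶜ)
    (A : Set α) (hA : WRep C A)
    (x : ℕ → α) (hmem : ∀ n, x n ∈ A) (hanti : ∀ n, x (n + 1) ≤ x n)
    (hco₁ : CoveredBy (Set.range x) A) (hco₂ : CoveredBy A (Set.range x)) :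
    GRep C A := by
  classical
  obtain ⟨⟨hAbot, hAr1, hAnolb⟩, hAmax⟩ := hA
  have hxAnti : Antitone x := antitone_nat_of_succ_le hanti
  -- monotonicity in the first argument
  have monoL : ∀ {u u' z : α}, C u z → u ≤ u' → C u' z := by
    intro u u' z h hle
    exact hC2 _ _ (hC3 _ _ hle _ (hC2 _ _ h))
  -- NTP implies ≤
  have ntp_le : ∀ {u v : α}, NTP C u v → u ≤ v := by
    intro u v h
    by_contra hle
    have hne : u ⊓ vᶜ ≠ ⊥ := by
      intro h0
      rw [← sdiff_eq] at h0
      exact hle (sdiff_eq_bot_iff.mp h0)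
    exact h (monoL (hC1 _ _ inf_le_right hne) inf_le_left)
  have ntp_trans : ∀ {u v w : α}, NTP C u v → NTP C v w → NTP C u w := by
    intro u v w h1 h2 hc
    exact h2 (monoL hc (ntp_le h1))
  refine ⟨⟨x 0, hmem 0⟩, hAbot, hAr1, ?_, ?_⟩
  · -- (r2)
    intro u hu
    by_contra hno
    push_neg at hno
    have hlb : ∀ w ∈ A, u ≤ w := by
      intro w hw
      rcases hAr1 u hu w hw with he | h1 | h1
      · exact he.le
      · exact ntp_le h1
      · exact absurd h1 (hno w hw)
    exact hAnolb ⟨u, fun hb => hAbot (hb ▸ hu), hlb⟩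
  · -- (r3)
    intro a b h
    by_contra hCab
    have hax : ∀ n, x n ⊓ a ≠ ⊥ := fun n => (h _ (hmem n)).1
    -- a strictly ≪-decreasing subsequence of x
    have hstep : ∀ N, ∃ n, N < n ∧ NTP C (x n) (x N) := by
      intro N
      have hne : ∃ n, N < n ∧ x n ≠ x N := by
        by_contra hcon
        push_neg at hcon
        have hlb : ∀ w ∈ A, x N ≤ w := by
          intro w hw
          obtain ⟨_, ⟨n, rfl⟩, hle⟩ := hco₁ w hw
          rcases le_or_gt n N with h' | h'
          · exact (hxAnti h').trans hle
          · exact (hcon n h').symm ▸ hle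
        exact hAnolb ⟨x N, fun hb => hAbot (hb ▸ hmem N), hlb⟩
      obtain ⟨n, hn, hnex⟩ := hne
      refine ⟨n, hn, ?_⟩
      rcases hAr1 _ (hmem n) _ (hmem N) with he | h1 | h1
      · exact absurd he hnex
      · exact h1
      · exact absurd (le_antisymm (ntp_le h1) (hxAnti hn.le)).symm hnex
    choose f hf1 hf2 using hstep
    set m : ℕ → ℕ := fun k => Nat.rec 0 (fun _ ih => f ih) k with hm
    have hmsucc : ∀ k, m (k + 1) = f (m k) := fun k => rfl
    have hmk : ∀ k, k ≤ m k := by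
      intro k
      induction k with
      | zero => exact Nat.zero_le _
      | succ k ih => exact Nat.succ_le_of_lt (lt_of_le_of_lt ih (hf1 (m k)))
    set y : ℕ → α := fun k => x (m k) with hy
    have hyc : ∀ k, NTP C (y (k + 1)) (y k) := fun k => hf2 (m k)
    -- interpolation chain between a and bᶜ
    have hab' : NTP C a bᶜ := by
      unfold NTP
      rw [compl_compl]
      exact hCab
    choose g hg1 hg2 using fun p : {d : α // NTP C a d} => hIA a p.1 p.2
    set D : ℕ → {d : α // NTP C a d} :=
      fun k => Nat.rec ⟨bᶜ, hab'⟩ (fun _ p => ⟨g p, hg1 p⟩) k with hD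
    set d : ℕ → α := fun k => (D k).1 with hd
    have hda : ∀ k, NTP C a (d k) := fun k => (D k).2
    have hdc : ∀ k, NTP C (d (k + 1)) (d k) := fun k => hg2 (D k)
    have hd0 : d 0 = bᶜ := rfl
    -- the witnessing abstractive chain
    set c : ℕ → α := fun k => y k ⊓ d k with hc
    have hcne : ∀ k, c k ≠ ⊥ := by
      intro k h0
      apply hax (m k)
      have hle : x (m k) ⊓ a ≤ c k := inf_le_inf_left _ (ntp_le (hda k))
      exact le_bot_iff.mp (h0 ▸ hle)
    have hcc : ∀ k, NTP C (c (k + 1)) (c k) := by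
      intro k hCk
      have hCk' : C (c (k + 1)) ((y k)ᶜ ⊔ (d k)ᶜ) := by
        rwa [hc, compl_inf] at hCk
      rcases hC4 _ _ _ hCk' with h' | h'
      · exact hyc k (monoL h' inf_le_left)
      · exact hdc k (monoL h' inf_le_right)
    have hchain : ∀ j k, j < k → NTP C (c k) (c j) := by
      intro j k hjk
      induction k with
      | zero => exact absurd hjk (Nat.not_lt_zero j)
      | succ k ih =>
        rcases Nat.lt_succ_iff_lt_or_eq.mp hjk with h' | h'
        · exact ntp_trans (hcc k) (ih h')
        · exact h' ▸ hcc k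
    have habstr : Abstr C (Set.range c) := by
      refine ⟨?_, ?_, ?_⟩
      · rintro ⟨k, hk⟩
        exact hcne k hk
      · rintro _ ⟨j, rfl⟩ _ ⟨k, rfl⟩
        rcases lt_trichotomy j k with h' | h' | h'
        · exact Or.inr (Or.inr (hchain j k h'))
        · exact Or.inl (congrArg c h')
        · exact Or.inr (Or.inl (hchain k j h'))
      · rintro ⟨z, hz, hzle⟩
        refine hAnolb ⟨z, hz, ?_⟩
        intro w hw
        obtain ⟨_, ⟨n, rfl⟩, hle⟩ := hco₁ w hw
        exact (hzle (c n) ⟨n, rfl⟩).trans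
          (inf_le_left.trans ((hxAnti (hmk n)).trans hle))
    have hcov : CoveredBy (Set.range c) A := by
      intro w hw
      obtain ⟨_, ⟨n, rfl⟩, hle⟩ := hco₁ w hw
      exact ⟨c n, ⟨n, rfl⟩, inf_le_left.trans ((hxAnti (hmk n)).trans hle)⟩
    obtain ⟨u, hu, hule⟩ := hAmax (Set.range c) habstr hcov (c 0) ⟨0, rfl⟩
    apply (h u hu).2
    have hub : u ⊓ b ≤ bᶜ ⊓ b :=
      inf_le_inf_right _ (hule.trans (inf_le_right.trans hd0.le))
    rw [compl_inf_eq_bot] at hub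
    exact le_bot_iff.mp hub
end

section
/- Let B be a Boolean algebra and d ∈ B a nonzero element. Then the Boolean contact algebra (B, C_d) satisfies the generalized interpolation axiom (GIA): for every x ∈ B and every set Y ⊆ B, if x ≪ y for all y ∈ Y (with ≪ defined from C_d), then there is z ∈ B with x ≪ z and z ≪ y for all y ∈ Y. -/
variable {α : Type*}

theorem stmt18 [BooleanAlgebra α] (d : α) (hd : d ≠ ⊥) :
    ∀ (x : α) (Y : Set α), (∀ y ∈ Y, NTP (Cd d) x y) →
      ∃ z : α, NTP (Cd d) x z ∧ ∀ y ∈ Y, NTP (Cd d) z y := by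
  intro x Y hY
  have key : ∀ y ∈ Y, x ≤ y ∧ (x ⊓ d = ⊥ ∨ d ≤ y) := by
    intro y hy
    have h := hY y hy
    unfold NTP Cd at h
    push_neg at h
    obtain ⟨h1, h2⟩ := h
    constructor
    · have : x \ y = ⊥ := by rwa [sdiff_eq]
      exact sdiff_eq_bot_iff.mp this
    · by_cases hx : x ⊓ d = ⊥
      · exact Or.inl hx
      · right
        have : yᶜ ⊓ d = ⊥ := h2 hx
        have : d \ y = ⊥ := by rwa [sdiff_eq, inf_comm]
        exact sdiff_eq_bot_iff.mp this
  by_cases hx : x ⊓ d = ⊥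
  · refine ⟨x, ?_, ?_⟩
    · unfold NTP Cd
      push_neg
      exact ⟨by simp, fun h => absurd hx h⟩
    · intro y hy
      unfold NTP Cd
      push_neg
      refine ⟨?_, fun h => absurd hx h⟩
      have := (key y hy).1
      rw [← sdiff_eq, sdiff_eq_bot_iff]
      exact this
  · refine ⟨x ⊔ d, ?_, ?_⟩
    · unfold NTP Cd
      push_neg
      constructor
      · rw [← sdiff_eq, sdiff_eq_bot_iff]
        exact le_sup_left
      · intro _
        rw [inf_comm, ← sdiff_eq, sdiff_eq_bot_iff]
        exact le_sup_right
    · intro y hy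
      obtain ⟨h1, h2⟩ := key y hy
      have hdy : d ≤ y := h2.resolve_left hx
      unfold NTP Cd
      push_neg
      constructor
      · rw [← sdiff_eq, sdiff_eq_bot_iff]
        exact sup_le h1 hdy
      · intro _
        rw [inf_comm, ← sdiff_eq, sdiff_eq_bot_iff]
        exact hdy
end
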